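/- arXiv:1704.06961 — 3 statements merged into one kernel-verified Lean document; each statement's English description precedes it below -/
import Mathlib

section
/- Let X and Y be real Banach spaces and let F : B_X → B_Y be a non-expansive bijection from the closed unit ball of X onto the closed unit ball of Y. If x ∈ B_X is such that F(x) is an extreme point of B_Y, then F(−x) = −F(x). -/
open Metric Set

/-- If `F 0 = c ≠ 0`, the point of the sphere opposite to `c` has a preimage `u` with
`dist (F u) (F 0) = r + ‖c‖ > r ≥ dist u 0`. -/
theorem LipschitzOnWith.map_zero_of_surjOn_closedBall {X Y : Type*} [SeminormedAddCommGroup X]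
    [NormedAddCommGroup Y] [NormedSpace ℝ Y] {F : X → Y} {r : ℝ} (hr : 0 ≤ r)
    (hF : LipschitzOnWith 1 F (closedBall 0 r))
    (hsurj : SurjOn F (closedBall 0 r) (closedBall 0 r)) : F 0 = 0 := by
  by_contra hc
  set c := F 0
  have hc_pos : 0 < ‖c‖ := norm_pos_iff.mpr hc
  set y : Y := -((r / ‖c‖) • c)
  have hy : y ∈ closedBall 0 r := by
    simp [y, norm_smul, abs_of_nonneg hr, div_mul_cancel₀ _ hc_pos.ne']
  obtain ⟨u, hu, hFu⟩ := hsurj hy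
  have h0 : (0 : X) ∈ closedBall 0 r := mem_closedBall_self hr
  have hdist : dist (F u) c = r + ‖c‖ := by
    have hyc : y - c = -((r / ‖c‖ + 1) • c) := by module
    rw [dist_eq_norm, hFu, hyc, norm_neg, norm_smul, Real.norm_of_nonneg (by positivity),
      add_mul, div_mul_cancel₀ _ hc_pos.ne', one_mul]
  have hlip : dist (F u) c ≤ dist u 0 := by simpa using hF.dist_le_mul u hu 0 h0
  have hu_le : dist u 0 ≤ r := hu
  linarith

theorem dist_midpoint_left_le_of_mem_closedBall {X : Type*} [SeminormedAddCommGroup X]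
    [NormedSpace ℝ X] {x u c : X} {r : ℝ}
    (hx : x ∈ closedBall c r) (hu : u ∈ closedBall c r) : dist (midpoint ℝ x u) x ≤ r := by
  have hxu : dist x u ≤ 2 * r := by
    linarith [dist_triangle_right x u c, mem_closedBall.mp hx, mem_closedBall.mp hu]
  rw [dist_midpoint_left, Real.norm_two]
  linarith

theorem nonexpansive_bijection_extreme_point_odd_general
    {X Y : Type*} [NormedAddCommGroup X] [NormedSpace ℝ X]
    [NormedAddCommGroup Y] [NormedSpace ℝ Y]
    (F : X → Y)
    (hbij : Set.BijOn F (closedBall (0 : X) 1) (closedBall (0 : Y) 1))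
    (hne : ∀ x ∈ closedBall (0 : X) 1, ∀ y ∈ closedBall (0 : X) 1,
      ‖F x - F y‖ ≤ ‖x - y‖)
    (x : X) (hx : x ∈ closedBall (0 : X) 1)
    (hext : F x ∈ closedBall (0 : Y) 1 ∧ ∀ y : Y, y ≠ 0 →
      F x + y ∉ closedBall (0 : Y) 1 ∨ F x - y ∉ closedBall (0 : Y) 1) :
    F (-x) = -F x := by
  have hF : LipschitzOnWith 1 F (closedBall 0 1) :=
    .mk_one fun a ha b hb => by simpa only [dist_eq_norm] using hne a ha b hb
  have hF0 : F 0 = 0 := hF.map_zero_of_surjOn_closedBall zero_le_one hbij.surjOn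
  obtain ⟨u, hu, hFu⟩ : -F x ∈ F '' closedBall 0 1 :=
    hbij.surjOn (by simpa using hbij.mapsTo hx)
  set m := midpoint ℝ x u
  have hm : m ∈ closedBall 0 1 := (convex_closedBall 0 1).midpoint_mem hx hu
  -- `F m` is within distance 1 of both `F x` and `-F x`, which an extreme point forbids.
  have hFm : F m = 0 := by
    by_contra hFm
    have hdist_x : dist (F m) (F x) ≤ 1 := calc
      dist (F m) (F x) ≤ dist m x := by simpa using hF.dist_le_mul m hm x hx
      _ ≤ 1 := dist_midpoint_left_le_of_mem_closedBall hx hu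
    have hdist_u : dist (F m) (F u) ≤ 1 := calc
      dist (F m) (F u) ≤ dist m u := by simpa using hF.dist_le_mul m hm u hu
      _ ≤ 1 := by
        simpa only [m, midpoint_comm] using dist_midpoint_left_le_of_mem_closedBall hu hx
    rcases hext.2 (F m) hFm with h | h
    · exact h (by simpa [dist_eq_norm, hFu, add_comm] using hdist_u)
    · exact h (by simpa [dist_eq_norm, norm_sub_rev] using hdist_x)
  have hm0 : m = 0 := hbij.injOn hm (mem_closedBall_self zero_le_one) (hFm.trans hF0.symm)
  have hux : u = -x := by
    simpa [Equiv.pointReflection_apply, eq_comm] using (midpoint_eq_iff (R := ℝ)).mp hm0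
  rw [← hux, hFu]

theorem nonexpansive_bijection_extreme_point_odd
    {X Y : Type*} [NormedAddCommGroup X] [NormedSpace ℝ X] [CompleteSpace X]
    [NormedAddCommGroup Y] [NormedSpace ℝ Y] [CompleteSpace Y]
    (F : X → Y)
    (hbij : Set.BijOn F (closedBall (0 : X) 1) (closedBall (0 : Y) 1))
    (hne : ∀ x ∈ closedBall (0 : X) 1, ∀ y ∈ closedBall (0 : X) 1,
      ‖F x - F y‖ ≤ ‖x - y‖)
    (x : X) (hx : x ∈ closedBall (0 : X) 1)
    (hext : F x ∈ closedBall (0 : Y) 1 ∧ ∀ y : Y, y ≠ 0 →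
      F x + y ∉ closedBall (0 : Y) 1 ∨ F x - y ∉ closedBall (0 : Y) 1) :
    F (-x) = -F x :=
  nonexpansive_bijection_extreme_point_odd_general F hbij hne x hx hext
end

section
/- Let X be a real Banach space, Y a strictly convex real Banach space, and let F : B_X → B_Y be a non-expansive bijection from the closed unit ball of X onto the closed unit ball of Y. Then F(a·x) = a·F(x) for every x ∈ S_X and every a ∈ (0, 1). -/
open Metric Set

/-- The hypotheses force equality in `‖z‖ ≤ ‖y‖ + ‖z - y‖`, which in a strictly convex
space puts `y` on the segment `[0, z]`. -/
theorem eq_smul_of_norm_le_of_norm_sub_le {E : Type*} [NormedAddCommGroup E] [NormedSpace ℝ E]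
    [StrictConvexSpace ℝ E] {y z : E} {a : ℝ} (hy : ‖y‖ ≤ a * ‖z‖)
    (hzy : ‖z - y‖ ≤ (1 - a) * ‖z‖) : y = a • z := by
  have htri := norm_sub_norm_le z y
  have hy' : dist 0 y = a * dist 0 z := by
    simp only [dist_zero_left]; linarith
  have hzy' : dist y z = (1 - a) * dist 0 z := by
    rw [dist_comm, dist_eq_norm, dist_zero_left]; linarith
  simpa [AffineMap.lineMap_apply_module] using
    eq_lineMap_of_dist_eq_mul_of_dist_eq_mul hy' hzy'

section NonexpansiveOnUnitBall

variable {X Y : Type*} [NormedAddCommGroup X] [NormedAddCommGroup Y] {F : X → Y}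
  (hne : ∀ x ∈ closedBall (0 : X) 1, ∀ y ∈ closedBall (0 : X) 1,
    ‖F x - F y‖ ≤ ‖x - y‖)
include hne

/-- If `F 0 ≠ 0`, the unit vector pointing away from `F 0` is at distance `1 + ‖F 0‖ > 1` from
`F 0`, so it has no preimage within distance `1` of `0`. -/
theorem map_zero_eq_zero_of_surjOn [NormedSpace ℝ Y]
    (hsurj : SurjOn F (closedBall 0 1) (closedBall 0 1)) : F 0 = 0 := by
  by_contra hF0
  have hpos : 0 < ‖F 0‖ := norm_pos_iff.mpr hF0
  set y : Y := -(‖F 0‖⁻¹ • F 0)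
  have hy : ‖y‖ = 1 := by
    rw [norm_neg, norm_smul, norm_inv, norm_norm, inv_mul_cancel₀ hpos.ne']
  obtain ⟨x, hx, hFx⟩ := hsurj (mem_closedBall_zero_iff.mpr hy.le)
  have hfar : ‖F 0 - F x‖ = ‖F 0‖ + 1 := by
    rw [hFx, sub_neg_eq_add, show F 0 + ‖F 0‖⁻¹ • F 0 = (1 + ‖F 0‖⁻¹) • F 0 by
      rw [add_smul, one_smul], norm_smul, Real.norm_of_nonneg (by positivity),
      add_mul, one_mul, inv_mul_cancel₀ hpos.ne']
  have hnear : ‖F 0 - F x‖ ≤ 1 := by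
    calc ‖F 0 - F x‖ ≤ ‖0 - x‖ := hne 0 (mem_closedBall_self zero_le_one) x hx
      _ ≤ 1 := by simpa using hx
  linarith

variable (hF0 : F 0 = 0)
include hF0

theorem norm_map_le_of_map_zero {x : X} (hx : x ∈ closedBall 0 1) : ‖F x‖ ≤ ‖x‖ := by
  simpa [hF0] using hne x hx 0 (mem_closedBall_self zero_le_one)

/-- The points `0`, `F (a • u)`, `F u` satisfy the triangle inequality with equality, so
strict convexity puts `F (a • u)` at `a • F u`. -/
theorem map_smul_of_norm_map_eq_one [NormedSpace ℝ X] [NormedSpace ℝ Y]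
    [StrictConvexSpace ℝ Y] {u : X} (hu : u ∈ closedBall 0 1) (hFu : ‖F u‖ = 1)
    {a : ℝ} (ha : a ∈ Icc (0 : ℝ) 1) : F (a • u) = a • F u := by
  have hu' : ‖u‖ ≤ 1 := mem_closedBall_zero_iff.mp hu
  have hau : a • u ∈ closedBall 0 1 := by
    rw [mem_closedBall_zero_iff, norm_smul, Real.norm_of_nonneg ha.1]
    nlinarith [ha.1, ha.2]
  apply eq_smul_of_norm_le_of_norm_sub_le
  · calc ‖F (a • u)‖ ≤ ‖a • u‖ := norm_map_le_of_map_zero hne hF0 hau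
      _ = a * ‖u‖ := by rw [norm_smul, Real.norm_of_nonneg ha.1]
      _ ≤ a * ‖F u‖ := by rw [hFu]; nlinarith [ha.1]
  · calc ‖F u - F (a • u)‖ ≤ ‖u - a • u‖ := hne u hu (a • u) hau
      _ = (1 - a) * ‖u‖ := by
        rw [show u - a • u = (1 - a) • u by rw [sub_smul, one_smul], norm_smul,
          Real.norm_of_nonneg (sub_nonneg.mpr ha.2)]
      _ ≤ (1 - a) * ‖F u‖ := by rw [hFu]; nlinarith [ha.2]

/-- If `‖F x‖ = t < 1`, write `F x = t • F u` with `‖F u‖ = 1`; then `F (t • u) = F x`,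
and injectivity gives `x = t • u`, which has norm at most `t`. -/
theorem norm_map_eq_one_of_norm_eq_one [NormedSpace ℝ X] [NormedSpace ℝ Y]
    [StrictConvexSpace ℝ Y] (hbij : BijOn F (closedBall 0 1) (closedBall 0 1)) {x : X}
    (hx : ‖x‖ = 1) : ‖F x‖ = 1 := by
  have hxB : x ∈ closedBall 0 1 := mem_closedBall_zero_iff.mpr hx.le
  have hFx : ‖F x‖ ≤ 1 := mem_closedBall_zero_iff.mp (hbij.mapsTo hxB)
  by_contra hFx_ne_one
  have hlt : ‖F x‖ < 1 := lt_of_le_of_ne hFx hFx_ne_one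
  have hFx0 : F x ≠ 0 := by
    intro h
    have : x = 0 := hbij.injOn hxB (mem_closedBall_self zero_le_one) (by rw [h, hF0])
    simp [this] at hx
  have hpos : 0 < ‖F x‖ := norm_pos_iff.mpr hFx0
  set t := ‖F x‖
  have hz : ‖t⁻¹ • F x‖ = 1 := by
    rw [norm_smul, norm_inv, norm_norm, inv_mul_cancel₀ hpos.ne']
  obtain ⟨u, hu, hFu⟩ := hbij.surjOn (mem_closedBall_zero_iff.mpr hz.le)
  have hu' : ‖u‖ ≤ 1 := mem_closedBall_zero_iff.mp hu
  have htu : t • u ∈ closedBall 0 1 := by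
    rw [mem_closedBall_zero_iff, norm_smul, norm_norm]
    nlinarith
  have hF : F (t • u) = F x := by
    rw [map_smul_of_norm_map_eq_one hne hF0 hu (hFu ▸ hz) ⟨hpos.le, hFx⟩, hFu, smul_smul,
      mul_inv_cancel₀ hpos.ne', one_smul]
  have hxu : t • u = x := hbij.injOn htu hxB hF
  have : ‖x‖ ≤ t := by
    rw [← hxu, norm_smul, norm_norm]
    nlinarith
  linarith

end NonexpansiveOnUnitBall

theorem nonexpansive_bijection_strictly_convex_homogeneous_on_sphere_general
    {X Y : Type*} [NormedAddCommGroup X] [NormedSpace ℝ X]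
    [NormedAddCommGroup Y] [NormedSpace ℝ Y]
    [StrictConvexSpace ℝ Y]
    (F : X → Y)
    (hbij : Set.BijOn F (closedBall (0 : X) 1) (closedBall (0 : Y) 1))
    (hne : ∀ x ∈ closedBall (0 : X) 1, ∀ y ∈ closedBall (0 : X) 1,
      ‖F x - F y‖ ≤ ‖x - y‖) :
    ∀ x ∈ sphere (0 : X) 1, ∀ a ∈ Set.Ioo (0 : ℝ) 1, F (a • x) = a • F x := by
  intro x hx a ha
  have hF0 : F 0 = 0 := map_zero_eq_zero_of_surjOn hne hbij.surjOn
  have hx' : ‖x‖ = 1 := mem_sphere_zero_iff_norm.mp hx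
  exact map_smul_of_norm_map_eq_one hne hF0 (sphere_subset_closedBall hx)
    (norm_map_eq_one_of_norm_eq_one hne hF0 hbij hx') (Ioo_subset_Icc_self ha)

theorem nonexpansive_bijection_strictly_convex_homogeneous_on_sphere
    {X Y : Type*} [NormedAddCommGroup X] [NormedSpace ℝ X] [CompleteSpace X]
    [NormedAddCommGroup Y] [NormedSpace ℝ Y] [CompleteSpace Y]
    [StrictConvexSpace ℝ Y]
    (F : X → Y)
    (hbij : Set.BijOn F (closedBall (0 : X) 1) (closedBall (0 : Y) 1))
    (hne : ∀ x ∈ closedBall (0 : X) 1, ∀ y ∈ closedBall (0 : X) 1,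
      ‖F x - F y‖ ≤ ‖x - y‖) :
    ∀ x ∈ sphere (0 : X) 1, ∀ a ∈ Set.Ioo (0 : ℝ) 1, F (a • x) = a • F x :=
  nonexpansive_bijection_strictly_convex_homogeneous_on_sphere_general F hbij hne
end

section
/- Let X be a real Banach space, Y a strictly convex real Banach space, and let F : B_X → B_Y be a non-expansive bijection from the closed unit ball of X onto the closed unit ball of Y. Then F is an isometry: ‖F(x) − F(y)‖ = ‖x − y‖ for all x, y ∈ B_X. -/
/-!
Strict convexity of `Y` pins `F` down along radii: `F 0 = 0`, and if `F a` lies on the unit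
sphere then `F (t • a) = t • F a` for `t ∈ [0, 1]` and `F (-a) = -F a`. Hence `‖F x‖ = ‖x‖` and
`F` commutes with scalars in `[0, 1]`. For a unit vector `a`, a norming functional at `F a` then
yields `2 - ‖a - ε • x₁‖ - ‖a + ε • x₂‖ ≤ ε ‖F x₁ - F x₂‖`. Where the norm is differentiable at
`a`, with derivative `ℓ`, letting `ε → 0⁺` gives `ℓ (x₁ - x₂) ≤ ‖F x₁ - F x₂‖`. By Rademacher's
theorem such points are dense in the span of `x₁, x₂`, and near `x₁ - x₂` the left side
approaches `‖x₁ - x₂‖`.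
-/

open Metric Set Filter Topology

theorem eq_lineMap_of_dist_le_mul_of_dist_le_mul {E P : Type*} [NormedAddCommGroup E]
    [NormedSpace ℝ E] [StrictConvexSpace ℝ E] [MetricSpace P] [NormedAddTorsor E P]
    {x y z : P} {r : ℝ} (hxy : dist x y ≤ r * dist x z) (hyz : dist y z ≤ (1 - r) * dist x z) :
    y = AffineMap.lineMap x z r := by
  have := dist_triangle x y z
  exact eq_lineMap_of_dist_eq_mul_of_dist_eq_mul (by linarith) (by linarith)

theorem LipschitzOnWith.norm_sub_le_norm_sub {E F : Type*} [SeminormedAddCommGroup E]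
    [SeminormedAddCommGroup F] {f : E → F} {s : Set E} (hf : LipschitzOnWith 1 f s)
    {x y : E} (hx : x ∈ s) (hy : y ∈ s) : ‖f x - f y‖ ≤ ‖x - y‖ := by
  simpa using hf.norm_sub_le hx hy

theorem LipschitzOnWith.dist_le_dist {α β : Type*} [PseudoMetricSpace α] [PseudoMetricSpace β]
    {f : α → β} {s : Set α} (hf : LipschitzOnWith 1 f s) {x y : α} (hx : x ∈ s) (hy : y ∈ s) :
    dist (f x) (f y) ≤ dist x y := by
  simpa using hf.dist_le_mul x hx y hy

section UnitBall

variable {X Y : Type*} [NormedAddCommGroup X] [NormedAddCommGroup Y] {F : X → Y}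

theorem LipschitzOnWith.norm_map_le (hF : LipschitzOnWith 1 F (closedBall 0 1)) (hF0 : F 0 = 0)
    {x : X} (hx : x ∈ closedBall 0 1) : ‖F x‖ ≤ ‖x‖ := by
  simpa [hF0] using hF.norm_sub_le_norm_sub hx (mem_closedBall_self zero_le_one)

variable [NormedSpace ℝ Y]

theorem LipschitzOnWith.map_zero_of_surjOn_closedBall_s11
    (hF : LipschitzOnWith 1 F (closedBall 0 1))
    (hsurj : SurjOn F (closedBall 0 1) (closedBall 0 1)) :
    F 0 = 0 := by
  by_contra h
  have hpos : 0 < ‖F 0‖ := norm_pos_iff.2 h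
  obtain ⟨x, hx, hFx⟩ := hsurj (show -‖F 0‖⁻¹ • F 0 ∈ closedBall (0 : Y) 1 by
    simp [norm_smul, hpos.ne'])
  have hdist : ‖F x - F 0‖ = 1 + ‖F 0‖ := by
    rw [hFx, show -‖F 0‖⁻¹ • F 0 - F 0 = -(‖F 0‖⁻¹ + 1) • F 0 by module, norm_smul, norm_neg,
      Real.norm_of_nonneg (by positivity)]
    field_simp
  have := hF.norm_sub_le_norm_sub hx (mem_closedBall_self zero_le_one)
  rw [hdist, sub_zero] at this
  linarith [mem_closedBall_zero_iff.1 hx]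

variable [NormedSpace ℝ X]

theorem LipschitzOnWith.map_smul_of_norm_map_eq_one [StrictConvexSpace ℝ Y]
    (hF : LipschitzOnWith 1 F (closedBall 0 1)) (hF0 : F 0 = 0) {a : X}
    (ha : a ∈ closedBall 0 1) (hFa : ‖F a‖ = 1) {t : ℝ} (ht : t ∈ Icc 0 1) :
    F (t • a) = t • F a := by
  have hta : t • a ∈ closedBall (0 : X) 1 :=
    (convex_closedBall 0 1).smul_mem_of_zero_mem (mem_closedBall_self zero_le_one) ha ht
  have ha1 : ‖a‖ ≤ 1 := mem_closedBall_zero_iff.1 ha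
  have h0 : ‖F (t • a) - F 0‖ ≤ t := calc
    _ ≤ ‖t • a - 0‖ := hF.norm_sub_le_norm_sub hta (mem_closedBall_self zero_le_one)
    _ ≤ t := by rw [sub_zero, norm_smul, Real.norm_of_nonneg ht.1]; nlinarith [ht.1]
  have h1 : ‖F a - F (t • a)‖ ≤ 1 - t := calc
    _ ≤ ‖a - t • a‖ := hF.norm_sub_le_norm_sub ha hta
    _ ≤ 1 - t := by
      rw [show a - t • a = (1 - t) • a by module, norm_smul,
        Real.norm_of_nonneg (sub_nonneg.2 ht.2)]
      nlinarith [ht.2]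
  have := eq_lineMap_of_dist_le_mul_of_dist_le_mul (x := (0 : Y)) (y := F (t • a)) (z := F a)
    (r := t) (by simpa [dist_eq_norm, hF0, hFa, norm_sub_rev] using h0)
    (by simpa [dist_eq_norm, hFa, norm_sub_rev] using h1)
  simpa [AffineMap.lineMap_apply_module] using this

theorem LipschitzOnWith.map_neg_of_norm_map_eq_one [StrictConvexSpace ℝ Y]
    (hF : LipschitzOnWith 1 F (closedBall 0 1))
    (hsurj : SurjOn F (closedBall 0 1) (closedBall 0 1)) (hinj : InjOn F (closedBall 0 1))
    {a : X} (ha : a ∈ closedBall 0 1) (hFa : ‖F a‖ = 1) :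
    F (-a) = -F a := by
  have hF0 := hF.map_zero_of_surjOn_closedBall_s11 hsurj
  obtain ⟨b, hb, hFb⟩ := hsurj (show -F a ∈ closedBall (0 : Y) 1 by simp [hFa])
  have hm : midpoint ℝ a b ∈ closedBall (0 : X) 1 := (convex_closedBall 0 1).midpoint_mem ha hb
  have hab : ‖(2 : ℝ)‖⁻¹ * dist a b ≤ 1 := by
    have := dist_triangle_right a b 0
    rw [mem_closedBall] at ha hb
    norm_num
    linarith
  have hFaFb : dist (F a) (F b) = 2 := by
    rw [hFb, dist_eq_norm, sub_neg_eq_add, ← two_smul ℝ, norm_smul, Real.norm_two, hFa, mul_one]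
  -- `F m` is within distance `1` of the antipodal points `±F a`, so it is their midpoint.
  have hFm : F (midpoint ℝ a b) = F 0 := by
    rw [hF0, ← midpoint_self_neg ℝ (F a), ← hFb]
    refine eq_lineMap_of_dist_le_mul_of_dist_le_mul ?_ ?_ <;> rw [hFaFb] <;> norm_num
    · calc dist (F a) (F (midpoint ℝ a b)) ≤ dist a (midpoint ℝ a b) := hF.dist_le_dist ha hm
        _ ≤ 1 := by rwa [dist_left_midpoint]
    · calc dist (F (midpoint ℝ a b)) (F b) ≤ dist (midpoint ℝ a b) b := hF.dist_le_dist hm hb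
        _ ≤ 1 := by rwa [dist_midpoint_right]
  have hb' : -a = b := by
    simpa [Equiv.pointReflection_apply] using
      midpoint_eq_iff.1 (hinj hm (mem_closedBall_self zero_le_one) hFm)
  rw [hb', hFb]

theorem LipschitzOnWith.exists_eq_smul_of_norm_map_eq_one [StrictConvexSpace ℝ Y]
    (hF : LipschitzOnWith 1 F (closedBall 0 1))
    (hsurj : SurjOn F (closedBall 0 1) (closedBall 0 1)) (hinj : InjOn F (closedBall 0 1))
    {x : X} (hx : x ∈ closedBall 0 1) (hx0 : x ≠ 0) :
    ∃ a ∈ closedBall 0 1, ‖F a‖ = 1 ∧ ∃ c ∈ Icc (0 : ℝ) 1, x = c • a := by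
  have hF0 := hF.map_zero_of_surjOn_closedBall_s11 hsurj
  have hpos : 0 < ‖F x‖ := norm_pos_iff.2 fun h ↦
    hx0 (hinj hx (mem_closedBall_self zero_le_one) (h.trans hF0.symm))
  obtain ⟨a, ha, hFa⟩ := hsurj (show ‖F x‖⁻¹ • F x ∈ closedBall (0 : Y) 1 by
    simp [norm_smul, hpos.ne'])
  have hFa1 : ‖F a‖ = 1 := by rw [hFa, norm_smul, norm_inv, norm_norm, inv_mul_cancel₀ hpos.ne']
  have hc : ‖F x‖ ∈ Icc (0 : ℝ) 1 :=
    ⟨norm_nonneg _, (hF.norm_map_le hF0 hx).trans (mem_closedBall_zero_iff.1 hx)⟩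
  refine ⟨a, ha, hFa1, ‖F x‖, hc, hinj hx ?_ ?_⟩
  · exact (convex_closedBall 0 1).smul_mem_of_zero_mem (mem_closedBall_self zero_le_one) ha hc
  · rw [hF.map_smul_of_norm_map_eq_one hF0 ha hFa1 hc, hFa, smul_inv_smul₀ hpos.ne']

theorem LipschitzOnWith.map_smul_of_surjOn_of_injOn [StrictConvexSpace ℝ Y]
    (hF : LipschitzOnWith 1 F (closedBall 0 1))
    (hsurj : SurjOn F (closedBall 0 1) (closedBall 0 1)) (hinj : InjOn F (closedBall 0 1))
    {x : X} (hx : x ∈ closedBall 0 1) {t : ℝ} (ht : t ∈ Icc 0 1) :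
    F (t • x) = t • F x := by
  have hF0 := hF.map_zero_of_surjOn_closedBall_s11 hsurj
  rcases eq_or_ne x 0 with rfl | hx0
  · simp [hF0]
  obtain ⟨a, ha, hFa, c, hc, rfl⟩ := hF.exists_eq_smul_of_norm_map_eq_one hsurj hinj hx hx0
  have htc : t * c ∈ Icc (0 : ℝ) 1 := ⟨mul_nonneg ht.1 hc.1, mul_le_one₀ ht.2 hc.1 hc.2⟩
  rw [smul_smul, hF.map_smul_of_norm_map_eq_one hF0 ha hFa htc,
    hF.map_smul_of_norm_map_eq_one hF0 ha hFa hc, smul_smul]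

theorem LipschitzOnWith.norm_map_of_surjOn_of_injOn [StrictConvexSpace ℝ Y]
    (hF : LipschitzOnWith 1 F (closedBall 0 1))
    (hsurj : SurjOn F (closedBall 0 1) (closedBall 0 1)) (hinj : InjOn F (closedBall 0 1))
    {x : X} (hx : x ∈ closedBall 0 1) :
    ‖F x‖ = ‖x‖ := by
  have hF0 := hF.map_zero_of_surjOn_closedBall_s11 hsurj
  rcases eq_or_ne x 0 with rfl | hx0
  · simp [hF0]
  obtain ⟨a, ha, hFa, c, hc, rfl⟩ := hF.exists_eq_smul_of_norm_map_eq_one hsurj hinj hx hx0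
  have ha1 : ‖a‖ = 1 :=
    le_antisymm (mem_closedBall_zero_iff.1 ha) (hFa ▸ hF.norm_map_le hF0 ha)
  rw [hF.map_smul_of_norm_map_eq_one hF0 ha hFa hc, norm_smul, norm_smul, hFa, ha1]

theorem LipschitzOnWith.two_sub_norm_sub_sub_norm_add_le [StrictConvexSpace ℝ Y]
    (hF : LipschitzOnWith 1 F (closedBall 0 1))
    (hsurj : SurjOn F (closedBall 0 1) (closedBall 0 1)) (hinj : InjOn F (closedBall 0 1))
    {a x₁ x₂ : X} (ha : ‖a‖ = 1) (hx₁ : x₁ ∈ closedBall 0 1) (hx₂ : x₂ ∈ closedBall 0 1)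
    {ε : ℝ} (hε : ε ∈ Icc 0 1) :
    2 - ‖a - ε • x₁‖ - ‖a + ε • x₂‖ ≤ ε * ‖F x₁ - F x₂‖ := by
  have hB := convex_closedBall (0 : X) 1
  have h0 : (0 : X) ∈ closedBall 0 1 := mem_closedBall_self zero_le_one
  have haB : a ∈ closedBall (0 : X) 1 := mem_closedBall_zero_iff.2 ha.le
  have hnegaB : -a ∈ closedBall (0 : X) 1 := by simpa using haB
  have hεx₁ : ε • x₁ ∈ closedBall (0 : X) 1 := hB.smul_mem_of_zero_mem h0 hx₁ hε
  have hεx₂ : ε • x₂ ∈ closedBall (0 : X) 1 := hB.smul_mem_of_zero_mem h0 hx₂ hε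
  have hFa : ‖F a‖ = 1 := (hF.norm_map_of_surjOn_of_injOn hsurj hinj haB).trans ha
  -- Testing against a norming functional `g` at `F a` makes the bound linear in `F`.
  obtain ⟨g, hg, hgFa⟩ := exists_dual_vector ℝ (F a) (by simp [hFa])
  replace hgFa : g (F a) = 1 := by simpa [hFa] using hgFa
  have hg_le (y : Y) : g y ≤ ‖y‖ :=
    (Real.le_norm_self _).trans ((g.le_opNorm y).trans_eq (by rw [hg, one_mul]))
  calc 2 - ‖a - ε • x₁‖ - ‖a + ε • x₂‖
      ≤ 2 - ‖F a - F (ε • x₁)‖ - ‖F (ε • x₂) - F (-a)‖ := by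
        have := hF.norm_sub_le_norm_sub hεx₂ hnegaB
        rw [sub_neg_eq_add, add_comm] at this
        linarith [hF.norm_sub_le_norm_sub haB hεx₁]
    _ ≤ 2 - g (F a - F (ε • x₁)) - g (F (ε • x₂) - F (-a)) := by
        linarith [hg_le (F a - F (ε • x₁)), hg_le (F (ε • x₂) - F (-a))]
    _ = ε * g (F x₁ - F x₂) := by
        rw [hF.map_neg_of_norm_map_eq_one hsurj hinj haB hFa,
          hF.map_smul_of_surjOn_of_injOn hsurj hinj hx₁ hε,
          hF.map_smul_of_surjOn_of_injOn hsurj hinj hx₂ hε]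
        simp only [map_sub, map_neg, map_smul, hgFa, smul_eq_mul]
        ring
    _ ≤ ε * ‖F x₁ - F x₂‖ := mul_le_mul_of_nonneg_left (hg_le _) hε.1

end UnitBall

theorem HasDerivAt.le_of_eventually_le_add_mul {q : ℝ → ℝ} {q' x ρ : ℝ} (hq : HasDerivAt q q' x)
    (h : ∀ᶠ t in 𝓝[>] x, q t ≤ q x + (t - x) * ρ) : q' ≤ ρ := by
  refine le_of_tendsto ((hasDerivAt_iff_tendsto_slope.1 hq).mono_left (nhdsGT_le_nhdsNE x)) ?_
  filter_upwards [h, self_mem_nhdsWithin] with t ht (hxt : x < t)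
  rw [slope_def_field, div_le_iff₀ (sub_pos.2 hxt)]
  linarith

section NormDerivative

variable {E : Type*} [NormedAddCommGroup E] [NormedSpace ℝ E] {x₁ x₂ : E} {ρ : ℝ}

theorem fderiv_norm_apply_sub_le
    (h : ∀ a : E, ‖a‖ = 1 → ∀ᶠ ε in 𝓝[>] (0 : ℝ), 2 - ‖a - ε • x₁‖ - ‖a + ε • x₂‖ ≤ ε * ρ)
    {v : E} (hv : v ≠ 0) (hd : DifferentiableAt ℝ (‖·‖) v) :
    fderiv ℝ (‖·‖) v (x₁ - x₂) ≤ ρ := by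
  set ℓ := fderiv ℝ (‖·‖) v
  set a := ‖v‖⁻¹ • v
  have ha : ‖a‖ = 1 := norm_smul_inv_norm hv
  have hda : HasFDerivAt (‖·‖) ℓ a :=
    hd.hasFDerivAt.hasFDerivAt_norm_smul_pos (inv_pos.2 (norm_pos_iff.2 hv))
  have h₁ : HasDerivAt (fun ε : ℝ ↦ ‖a + ε • -x₁‖) (ℓ (-x₁)) 0 := hda.hasLineDerivAt _
  have h₂ : HasDerivAt (fun ε : ℝ ↦ ‖a + ε • x₂‖) (ℓ x₂) 0 := hda.hasLineDerivAt _
  have hq := (h₁.const_sub 2).sub h₂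
  rw [map_neg, neg_neg, ← map_sub] at hq
  refine hq.le_of_eventually_le_add_mul ?_
  filter_upwards [h a ha] with ε hε
  simp only [Pi.sub_apply, smul_neg, ← sub_eq_add_neg, zero_smul, add_zero, sub_zero, ha] at hε ⊢
  linarith

theorem norm_sub_le_of_two_sub_norm_sub_sub_norm_add_le_of_finiteDimensional
    [FiniteDimensional ℝ E]
    (h : ∀ a : E, ‖a‖ = 1 → ∀ᶠ ε in 𝓝[>] (0 : ℝ), 2 - ‖a - ε • x₁‖ - ‖a + ε • x₂‖ ≤ ε * ρ)
    (hρ : 0 ≤ ρ) : ‖x₁ - x₂‖ ≤ ρ := by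
  rcases eq_or_ne x₁ x₂ with rfl | hne
  · simpa using hρ
  set u := x₁ - x₂
  -- The derivative `ℓ` of the norm at `v` has `ℓ v = ‖v‖` and `‖ℓ‖ ≤ 1`, so `‖v‖ - ‖v - u‖ ≤ ℓ u`;
  -- by Rademacher's theorem such `v` are dense, and the bound passes to `v = u`.
  have hsub : {v : E | v ≠ 0} ∩ {v | DifferentiableAt ℝ (‖·‖) v} ⊆ {v | ‖v‖ - ‖v - u‖ ≤ ρ} := by
    rintro v ⟨hv, hd⟩
    set ℓ := fderiv ℝ (‖·‖) v
    have hℓ : ℓ (v - u) ≤ ‖v - u‖ := calc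
      ℓ (v - u) ≤ ‖ℓ‖ * ‖v - u‖ := (Real.le_norm_self _).trans (ℓ.le_opNorm _)
      _ ≤ ‖v - u‖ := mul_le_of_le_one_left (norm_nonneg _)
          (by simpa using norm_fderiv_le_of_lipschitz ℝ lipschitzWith_one_norm (x₀ := v))
    calc ‖v‖ - ‖v - u‖ ≤ ℓ v - ℓ (v - u) := by rw [hd.fderiv_norm_self]; linarith
      _ = ℓ u := by rw [map_sub, sub_sub_cancel]
      _ ≤ ρ := fderiv_norm_apply_sub_le h hv hd
  have hu : u ∈ closure ({v : E | v ≠ 0} ∩ {v | DifferentiableAt ℝ (‖·‖) v}) :=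
    dense_differentiableAt_norm.open_subset_closure_inter isOpen_ne (sub_ne_zero.2 hne)
  simpa using (isClosed_le (by fun_prop) continuous_const).closure_subset_iff.2 hsub hu

theorem norm_sub_le_of_two_sub_norm_sub_sub_norm_add_le
    (h : ∀ a : E, ‖a‖ = 1 → ∀ᶠ ε in 𝓝[>] (0 : ℝ), 2 - ‖a - ε • x₁‖ - ‖a + ε • x₂‖ ≤ ε * ρ)
    (hρ : 0 ≤ ρ) : ‖x₁ - x₂‖ ≤ ρ := by
  set V := Submodule.span ℝ {x₁, x₂}
  have : FiniteDimensional ℝ V := FiniteDimensional.span_of_finite ℝ (toFinite _)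
  have hx₁ : x₁ ∈ V := Submodule.subset_span (by simp)
  have hx₂ : x₂ ∈ V := Submodule.subset_span (by simp)
  have hV := norm_sub_le_of_two_sub_norm_sub_sub_norm_add_le_of_finiteDimensional
    (x₁ := (⟨x₁, hx₁⟩ : V)) (x₂ := ⟨x₂, hx₂⟩) (ρ := ρ) (fun a ha ↦ ?_) hρ
  · simpa using hV
  · simpa using h a (by simpa using ha)

end NormDerivative

theorem nonexpansive_bijection_strictly_convex_is_isometry_general
    {X Y : Type*} [NormedAddCommGroup X] [NormedSpace ℝ X]
    [NormedAddCommGroup Y] [NormedSpace ℝ Y]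
    [StrictConvexSpace ℝ Y]
    (F : X → Y)
    (hbij : Set.BijOn F (closedBall (0 : X) 1) (closedBall (0 : Y) 1))
    (hne : ∀ x ∈ closedBall (0 : X) 1, ∀ y ∈ closedBall (0 : X) 1,
      ‖F x - F y‖ ≤ ‖x - y‖) :
    ∀ x ∈ closedBall (0 : X) 1, ∀ y ∈ closedBall (0 : X) 1,
      ‖F x - F y‖ = ‖x - y‖ := by
  have hF : LipschitzOnWith 1 F (closedBall 0 1) :=
    lipschitzOnWith_iff_norm_sub_le.2 (by simpa using hne)
  intro x hx y hy
  refine le_antisymm (hne x hx y hy) ?_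
  refine norm_sub_le_of_two_sub_norm_sub_sub_norm_add_le (fun a ha ↦ ?_) (norm_nonneg _)
  filter_upwards [Ioc_mem_nhdsGT zero_lt_one] with ε hε
  exact hF.two_sub_norm_sub_sub_norm_add_le hbij.surjOn hbij.injOn ha hx hy (Ioc_subset_Icc_self hε)

theorem nonexpansive_bijection_strictly_convex_is_isometry
    {X Y : Type*} [NormedAddCommGroup X] [NormedSpace ℝ X] [CompleteSpace X]
    [NormedAddCommGroup Y] [NormedSpace ℝ Y] [CompleteSpace Y]
    [StrictConvexSpace ℝ Y]
    (F : X → Y)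
    (hbij : Set.BijOn F (closedBall (0 : X) 1) (closedBall (0 : Y) 1))
    (hne : ∀ x ∈ closedBall (0 : X) 1, ∀ y ∈ closedBall (0 : X) 1,
      ‖F x - F y‖ ≤ ‖x - y‖) :
    ∀ x ∈ closedBall (0 : X) 1, ∀ y ∈ closedBall (0 : X) 1,
      ‖F x - F y‖ = ‖x - y‖ :=
  nonexpansive_bijection_strictly_convex_is_isometry_general F hbij hne
end
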